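/- Let ψ : ℝ² → S² be the hedgehog lump with profile z(r) = -1 + 2e^{-r²/2}. There exist constants C > 0 and R* > 0 such that for all points with R = √(X²+Y²) ≥ R*, all first partial derivatives of ψ are bounded by C·R·e^{-R²/4} and all second partial derivatives are bounded by C·R²·e^{-R²/4}. -/

import Mathlib

open Real

/-- The hedgehog lump profile `z(r) = -1 + 2 e^{-r²/2}`. -/
noncomputable def zprof (r : ℝ) : ℝ := -1 + 2 * Real.exp (-r ^ 2 / 2)

/-- The hedgehog lump in Cartesian coordinates. -/
noncomputable def psiLump (p : ℝ × ℝ) : ℝ × ℝ × ℝ :=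
  (Real.sqrt (1 - zprof (Real.sqrt (p.1 ^ 2 + p.2 ^ 2)) ^ 2) * p.1 / Real.sqrt (p.1 ^ 2 + p.2 ^ 2),
   Real.sqrt (1 - zprof (Real.sqrt (p.1 ^ 2 + p.2 ^ 2)) ^ 2) * p.2 / Real.sqrt (p.1 ^ 2 + p.2 ^ 2),
   zprof (Real.sqrt (p.1 ^ 2 + p.2 ^ 2)))

/-!
For `R > 0` the map `ψ` is `(0, 0, -1)` plus `(a(R²) X, a(R²) Y, 2 e^{-R²/2})`, where
`a(s) = 2 e^{-s/4} (1 - e^{-s/2})^{1/2} s^{-1/2}`, because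
`1 - z(R)² = 4 e^{-R²/2} (1 - e^{-R²/2})`.

Bounds of the shape `‖Dⁱ f(x)‖ ≤ A ρⁱ` for all `i ≤ n` survive sums, products (Leibniz, at
the cost of a factor `2ⁿ`) and compositions (Faà di Bruno, at the cost of `n!`, the outer
`A ρ` becoming the new `ρ`). For `s ≥ 1` the three factors of `a` satisfy such bounds with
`ρ = 1` and `A` equal to `e^{-s/4}`, a constant and `s^{-1/2}`, while `X² + Y²` satisfies one
with `A = 8R²`, `ρ = 1/R`. Composing and multiplying by the coordinates gives
`‖Dⁱ ψ‖ ≤ C e^{-R²/4} (8R)ⁱ` for `i = 1, 2`.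
-/

open Set Filter Topology
open scoped Nat

section IteratedFDerivLE

variable {E F G : Type*} [NormedAddCommGroup E] [NormedSpace ℝ E] [NormedAddCommGroup F]
  [NormedSpace ℝ F] [NormedAddCommGroup G] [NormedSpace ℝ G]

def IteratedFDerivLE (f : E → F) (x : E) (n : ℕ) (A ρ : ℝ) : Prop :=
  ∀ i ≤ n, ‖iteratedFDeriv ℝ i f x‖ ≤ A * ρ ^ i

lemma ContDiffAt.exists_isOpen_contDiffOn {f : E → F} {x : E} {n : ℕ}
    (hf : ContDiffAt ℝ n f x) : ∃ U, IsOpen U ∧ x ∈ U ∧ ContDiffOn ℝ n f U := by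
  obtain ⟨u, hu, hfu⟩ := hf.contDiffOn le_rfl (by simp)
  obtain ⟨U, hUu, hU, hxU⟩ := mem_nhds_iff.mp hu
  exact ⟨U, hU, hxU, hfu.mono hUu⟩

namespace IteratedFDerivLE

variable {f g : E → F} {x : E} {n : ℕ} {A B ρ : ℝ}

lemma nonneg (h : IteratedFDerivLE f x n A ρ) : 0 ≤ A := by
  simpa using (norm_nonneg _).trans (h 0 (Nat.zero_le n))

lemma mono {A' ρ' : ℝ} (h : IteratedFDerivLE f x n A ρ) (hA : A ≤ A') (hρ : 0 ≤ ρ)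
    (hρρ' : ρ ≤ ρ') : IteratedFDerivLE f x n A' ρ' := fun i hi =>
  (h i hi).trans (by gcongr; linarith [h.nonneg])

lemma add (hf : ContDiffAt ℝ n f x) (hg : ContDiffAt ℝ n g x)
    (hfA : IteratedFDerivLE f x n A ρ) (hgB : IteratedFDerivLE g x n B ρ) :
    IteratedFDerivLE (fun y => f y + g y) x n (A + B) ρ := fun i hi => by
  rw [fun_iteratedFDeriv_add_apply (hf.of_le (by exact_mod_cast hi))
    (hg.of_le (by exact_mod_cast hi)), add_mul]
  exact (norm_add_le _ _).trans (add_le_add (hfA i hi) (hgB i hi))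

lemma prodMk {g : E → G} (hf : ContDiffAt ℝ n f x) (hg : ContDiffAt ℝ n g x)
    (hfA : IteratedFDerivLE f x n A ρ) (hgA : IteratedFDerivLE g x n A ρ) :
    IteratedFDerivLE (fun y => (f y, g y)) x n A ρ := fun i hi => by
  rw [iteratedFDeriv_prodMk hf hg (by exact_mod_cast hi), ContinuousMultilinearMap.opNorm_prod]
  exact max_le (hfA i hi) (hgA i hi)

lemma mul {𝔸 : Type*} [NormedRing 𝔸] [NormedAlgebra ℝ 𝔸] {f g : E → 𝔸}
    (hf : ContDiffAt ℝ n f x) (hg : ContDiffAt ℝ n g x)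
    (hfA : IteratedFDerivLE f x n A ρ) (hgB : IteratedFDerivLE g x n B ρ) :
    IteratedFDerivLE (fun y => f y * g y) x n (2 ^ n * A * B) ρ := by
  obtain ⟨U, hU, hxU, hfU⟩ := hf.exists_isOpen_contDiffOn
  obtain ⟨V, hV, hxV, hgV⟩ := hg.exists_isOpen_contDiffOn
  have hUV := hU.inter hV
  have hxUV : x ∈ U ∩ V := ⟨hxU, hxV⟩
  have hD : ∀ (u : E → 𝔸) (j : ℕ), iteratedFDerivWithin ℝ j u (U ∩ V) x =
      iteratedFDeriv ℝ j u x := fun u j => iteratedFDerivWithin_of_isOpen j hUV hxUV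
  intro i hi
  have hρi : 0 ≤ A * ρ ^ i := (norm_nonneg _).trans (hfA i hi)
  calc ‖iteratedFDeriv ℝ i (fun y => f y * g y) x‖
      ≤ ∑ j ∈ Finset.range (i + 1), (i.choose j : ℝ) * ‖iteratedFDeriv ℝ j f x‖ *
          ‖iteratedFDeriv ℝ (i - j) g x‖ := by
        simp only [← hD]
        exact norm_iteratedFDerivWithin_mul_le (hfU.mono inter_subset_left)
          (hgV.mono inter_subset_right) hUV.uniqueDiffOn hxUV (by exact_mod_cast hi)
    _ ≤ ∑ j ∈ Finset.range (i + 1), (i.choose j : ℝ) * (A * B * ρ ^ i) := by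
        refine Finset.sum_le_sum fun j hj => ?_
        have hji : j ≤ i := Nat.lt_succ_iff.mp (Finset.mem_range.mp hj)
        rw [show A * B * ρ ^ i = A * ρ ^ j * (B * ρ ^ (i - j)) by
          rw [← Nat.add_sub_cancel' hji, pow_add, Nat.add_sub_cancel_left]; ring, ← mul_assoc]
        have hfj := hfA j (hji.trans hi)
        have hf0 : 0 ≤ A * ρ ^ j := (norm_nonneg _).trans hfj
        gcongr
        exact hgB _ ((Nat.sub_le i j).trans hi)
    _ = 2 ^ i * A * B * ρ ^ i := by
        rw [← Finset.sum_mul, ← Nat.cast_sum, Nat.sum_range_choose]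
        push_cast
        ring
    _ ≤ 2 ^ n * A * B * ρ ^ i := by
        have := mul_nonneg hρi hgB.nonneg
        have h2 : (2 : ℝ) ^ i ≤ 2 ^ n := pow_le_pow_right₀ one_le_two hi
        nlinarith

lemma comp {g : F → G} {f : E → F} {C : ℝ} (hg : ContDiffAt ℝ n g (f x))
    (hf : ContDiffAt ℝ n f x) (hgC : IteratedFDerivLE g (f x) n C 1)
    (hfA : IteratedFDerivLE f x n A ρ) (hA : 1 ≤ A) (hρ : 0 ≤ ρ) :
    IteratedFDerivLE (g ∘ f) x n (n ! * C) (A * ρ) := by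
  obtain ⟨U, hU, hxU, hfU⟩ := hf.exists_isOpen_contDiffOn
  obtain ⟨V, hV, hxV, hgV⟩ := hg.exists_isOpen_contDiffOn
  have hW := hfU.continuousOn.isOpen_inter_preimage hU hV
  have hxW : x ∈ U ∩ f ⁻¹' V := ⟨hxU, hxV⟩
  intro i hi
  rw [← iteratedFDerivWithin_of_isOpen i hW hxW]
  calc ‖iteratedFDerivWithin ℝ i (g ∘ f) (U ∩ f ⁻¹' V) x‖
      ≤ i ! * C * (A * ρ) ^ i := by
        refine norm_iteratedFDerivWithin_comp_le hgV (hfU.mono inter_subset_left)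
          (by exact_mod_cast hi) hV.uniqueDiffOn hW.uniqueDiffOn (fun y hy => hy.2) hxW
          (fun j hj => ?_) (fun j hj1 hj => ?_)
        · rw [iteratedFDerivWithin_of_isOpen j hV hxV]
          simpa using hgC j (hj.trans hi)
        · rw [iteratedFDerivWithin_of_isOpen j hW hxW, mul_pow]
          refine (hfA j (hj.trans hi)).trans ?_
          gcongr
          exact le_self_pow₀ hA (by omega)
    _ ≤ n ! * C * (A * ρ) ^ i := by
        have := hgC.nonneg
        gcongr

end IteratedFDerivLE

lemma iteratedFDerivLE_const (c : F) (x : E) (n : ℕ) {ρ : ℝ} (hρ : 0 ≤ ρ) :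
    IteratedFDerivLE (fun _ : E => c) x n ‖c‖ ρ := by
  rintro (_ | i) -
  · simp
  · rw [iteratedFDeriv_succ_const, Pi.zero_apply, norm_zero]
    positivity

lemma ContinuousLinearMap.iteratedFDerivLE (L : E →L[ℝ] F) {x : E} {n : ℕ} {A ρ : ℝ}
    (hx : ‖L x‖ ≤ A) (hL : ‖L‖ ≤ A * ρ) (hρ : 0 ≤ ρ) :
    IteratedFDerivLE L x n A ρ := by
  have hA : 0 ≤ A := (norm_nonneg _).trans hx
  rintro (_ | _ | i) -
  · simpa using hx
  · simpa [← norm_iteratedFDeriv_fderiv] using hL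
  · rw [← norm_iteratedFDeriv_fderiv,
      show fderiv ℝ L = fun _ => L from funext fun _ => L.fderiv, iteratedFDeriv_succ_const,
      Pi.zero_apply, norm_zero]
    exact mul_nonneg hA (pow_nonneg hρ _)

lemma iteratedFDerivLE_exp_const_mul {c : ℝ} (hc : |c| ≤ 1) (x : ℝ) (n : ℕ) :
    IteratedFDerivLE (fun s => exp (c * s)) x n (exp (c * x)) 1 := fun i _ => by
  rw [norm_iteratedFDeriv_eq_norm_iteratedDeriv, iteratedDeriv_exp_const_mul, norm_mul,
    norm_pow, Real.norm_eq_abs, Real.norm_eq_abs, abs_exp, one_pow, mul_one]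
  exact mul_le_of_le_one_left (exp_pos _).le (pow_le_one₀ (abs_nonneg c) hc)

lemma iteratedFDerivLE_one_sub_exp_const_mul {c x : ℝ} (hc : |c| ≤ 1) (hcx : c * x ≤ 0)
    (n : ℕ) : IteratedFDerivLE (fun s => 1 - exp (c * s)) x n 1 1 := by
  rintro (_ | i) hi
  · rw [norm_iteratedFDeriv_zero, Real.norm_eq_abs, abs_le]
    constructor <;> linarith [exp_pos (c * x), exp_le_one_iff.mpr hcx]
  · rw [norm_iteratedFDeriv_eq_norm_iteratedDeriv, iteratedDeriv_const_sub i.succ_pos,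
      iteratedDeriv_neg, norm_neg, ← norm_iteratedFDeriv_eq_norm_iteratedDeriv, one_mul, one_pow]
    exact (iteratedFDerivLE_exp_const_mul hc x n _ hi).trans (by simpa using hcx)

lemma norm_iteratedFDeriv_rpow_const (r y : ℝ) (i : ℕ) :
    ‖iteratedFDeriv ℝ i (fun x : ℝ => x ^ r) y‖ =
      |(descPochhammer ℝ i).eval r| * |y ^ (r - i)| := by
  rw [norm_iteratedFDeriv_eq_norm_iteratedDeriv, iteratedDeriv_eq_iterate, iter_deriv_rpow_const,
    Real.norm_eq_abs, abs_mul]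

lemma abs_descPochhammer_eval_le_one {r : ℝ} (hr : |r| ≤ 1 / 2) {i : ℕ} (hi : i ≤ 2) :
    |(descPochhammer ℝ i).eval r| ≤ 1 := by
  have ⟨hr₁, hr₂⟩ := abs_le.mp hr
  interval_cases i
  · simp
  · simp; linarith
  · simp only [descPochhammer_succ_right, Polynomial.eval_mul, Polynomial.eval_sub,
      Polynomial.eval_X, Polynomial.eval_natCast, descPochhammer_zero, Polynomial.eval_one]
    rw [abs_le]
    constructor <;> push_cast <;> nlinarith

lemma iteratedFDerivLE_rpow_of_one_le {r y : ℝ} (hr : |r| ≤ 1 / 2) (hy : 1 ≤ y) :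
    IteratedFDerivLE (fun x : ℝ => x ^ r) y 2 (y ^ r) 1 := fun i hi => by
  rw [norm_iteratedFDeriv_rpow_const, abs_of_pos (rpow_pos_of_pos (by linarith) _), one_pow,
    mul_one]
  calc |(descPochhammer ℝ i).eval r| * y ^ (r - i) ≤ 1 * y ^ r :=
        mul_le_mul (abs_descPochhammer_eval_le_one hr hi)
          (rpow_le_rpow_of_exponent_le hy (by linarith [(Nat.cast_nonneg i : (0:ℝ) ≤ i)]))
          (rpow_nonneg (by linarith) _) zero_le_one
    _ = y ^ r := one_mul _

lemma iteratedFDerivLE_rpow_of_mem_Icc {r y : ℝ} (hr : |r| ≤ 1 / 2) (hy : y ∈ Icc (1 / 4) 1) :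
    IteratedFDerivLE (fun x : ℝ => x ^ r) y 2 64 1 := fun i hi => by
  have hy0 : 0 < y := by linarith [hy.1]
  rw [norm_iteratedFDeriv_rpow_const, abs_of_pos (rpow_pos_of_pos hy0 _), one_pow, mul_one]
  have hri : -3 ≤ r - i := by
    have : (i : ℝ) ≤ 2 := by exact_mod_cast hi
    linarith [(abs_le.mp hr).1]
  calc |(descPochhammer ℝ i).eval r| * y ^ (r - i) ≤ 1 * y ^ (-3 : ℝ) :=
        mul_le_mul (abs_descPochhammer_eval_le_one hr hi)
          (rpow_le_rpow_of_exponent_ge hy0 hy.2 hri) (rpow_nonneg hy0.le _) zero_le_one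
    _ ≤ 64 := by
        rw [one_mul, show (-3 : ℝ) = -((3 : ℕ) : ℝ) by norm_num, rpow_neg hy0.le,
          rpow_natCast, inv_le_comm₀ (by positivity) (by norm_num)]
        calc (64 : ℝ)⁻¹ = (1 / 4) ^ 3 := by norm_num
          _ ≤ y ^ 3 := by gcongr; exact hy.1

lemma iteratedFDerivLE_fst (p : E × F) {R : ℝ} (hR : 0 < R) (hp : ‖p.1‖ ≤ R) (n : ℕ) :
    IteratedFDerivLE (fun y : E × F => y.1) p n R R⁻¹ :=
  (ContinuousLinearMap.fst ℝ E F).iteratedFDerivLE hp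
    (by rw [mul_inv_cancel₀ hR.ne']; exact ContinuousLinearMap.norm_fst_le ..)
    (inv_nonneg.mpr hR.le)

lemma iteratedFDerivLE_snd (p : E × F) {R : ℝ} (hR : 0 < R) (hp : ‖p.2‖ ≤ R) (n : ℕ) :
    IteratedFDerivLE (fun y : E × F => y.2) p n R R⁻¹ :=
  (ContinuousLinearMap.snd ℝ E F).iteratedFDerivLE hp
    (by rw [mul_inv_cancel₀ hR.ne']; exact ContinuousLinearMap.norm_snd_le ..)
    (inv_nonneg.mpr hR.le)

end IteratedFDerivLE

noncomputable def radialFactor (s : ℝ) : ℝ :=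
  2 * exp (-1 / 4 * s) * (1 - exp (-1 / 2 * s)) ^ (1 / 2 : ℝ) * s ^ (-1 / 2 : ℝ)

lemma radialFactor_eq {s : ℝ} (hs : 0 < s) :
    radialFactor s = √(1 - zprof (√s) ^ 2) / √s := by
  have he : exp (-1 / 2 * s) = exp (-1 / 4 * s) ^ 2 := by rw [sq, ← exp_add]; ring_nf
  have h1 : 1 - zprof (√s) ^ 2 = (2 * exp (-1 / 4 * s)) ^ 2 * (1 - exp (-1 / 2 * s)) := by
    rw [zprof, sq_sqrt hs.le, show -s / 2 = -1 / 2 * s by ring, he]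
    ring
  rw [h1, sqrt_mul (sq_nonneg _), sqrt_sq (by positivity), radialFactor, sqrt_eq_rpow,
    show (-1 / 2 : ℝ) = -(1 / 2) by norm_num, rpow_neg hs.le, sqrt_eq_rpow]
  exact (div_eq_mul_inv _ _).symm

lemma one_sub_exp_neg_half_mul_mem_Icc {s : ℝ} (hs : 1 ≤ s) :
    1 - exp (-1 / 2 * s) ∈ Icc (1 / 4) 1 := by
  have h1 : exp (-1 / 2 * s) ≤ exp (-1 / 2) := exp_le_exp.mpr (by linarith)
  have h2 : exp (-1 / 2) ≤ 3 / 4 := by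
    rw [show (-1 / 2 : ℝ) = -(1 / 2) by norm_num, exp_neg,
      inv_le_comm₀ (exp_pos _) (by norm_num)]
    linarith [add_one_le_exp (1 / 2 : ℝ)]
  constructor <;> linarith [exp_pos (-1 / 2 * s)]

lemma contDiffAt_sqrt_one_sub_exp {s : ℝ} (hs : 0 < s) {n : ℕ} :
    ContDiffAt ℝ n (fun t => (1 - exp (-1 / 2 * t)) ^ (1 / 2 : ℝ)) s :=
  ContDiffAt.rpow_const_of_ne (by fun_prop) (sub_pos.mpr (exp_lt_one_iff.mpr (by linarith))).ne'

lemma contDiffAt_radialFactor {s : ℝ} (hs : 0 < s) {n : ℕ} : ContDiffAt ℝ n radialFactor s :=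
  (((contDiffAt_const (c := (2 : ℝ))).mul (by fun_prop)).mul
    (contDiffAt_sqrt_one_sub_exp hs)).mul (contDiffAt_rpow_const_of_ne hs.ne')

lemma iteratedFDerivLE_radialFactor {s : ℝ} (hs : 1 ≤ s) :
    IteratedFDerivLE radialFactor s 2 (2 ^ 14 * exp (-s / 4) / √s) 1 := by
  have hs0 : 0 < s := by linarith
  have hH := one_sub_exp_neg_half_mul_mem_Icc hs
  have hcE : ContDiffAt ℝ 2 (fun t => 2 * exp (-1 / 4 * t)) s := by fun_prop
  have hE : IteratedFDerivLE (fun t => 2 * exp (-1 / 4 * t)) s 2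
      (2 ^ 2 * ‖(2 : ℝ)‖ * exp (-1 / 4 * s)) 1 :=
    (iteratedFDerivLE_const (2 : ℝ) s 2 zero_le_one).mul contDiffAt_const (by fun_prop)
      (iteratedFDerivLE_exp_const_mul (by norm_num [abs_div]) s 2)
  have hu : IteratedFDerivLE (fun t => (1 - exp (-1 / 2 * t)) ^ (1 / 2 : ℝ)) s 2
      (2 ! * 64) (1 * 1) :=
    (iteratedFDerivLE_rpow_of_mem_Icc (by norm_num [abs_div]) hH).comp
      (contDiffAt_rpow_const_of_ne (by linarith [hH.1])) (by fun_prop)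
      (iteratedFDerivLE_one_sub_exp_const_mul (by norm_num [abs_div]) (by linarith) 2)
      le_rfl zero_le_one
  have h := (hE.mul hcE (contDiffAt_sqrt_one_sub_exp hs0)
    (hu.mono le_rfl (by norm_num) (by norm_num))).mul
    (hcE.mul (contDiffAt_sqrt_one_sub_exp hs0)) (contDiffAt_rpow_const_of_ne hs0.ne')
    (iteratedFDerivLE_rpow_of_one_le (r := -1 / 2) (by norm_num [abs_div]) hs)
  refine h.mono (le_of_eq ?_) zero_le_one le_rfl
  rw [Real.norm_two, Nat.factorial_two, show -s / 4 = -1 / 4 * s by ring,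
    show (-1 / 2 : ℝ) = -(1 / 2) by norm_num, rpow_neg hs0.le, ← sqrt_eq_rpow]
  push_cast
  ring

noncomputable def psiLumpShifted (p : ℝ × ℝ) : ℝ × ℝ × ℝ :=
  (radialFactor (p.1 ^ 2 + p.2 ^ 2) * p.1, radialFactor (p.1 ^ 2 + p.2 ^ 2) * p.2,
    2 * exp (-1 / 2 * (p.1 ^ 2 + p.2 ^ 2)))

lemma psiLump_eq_add_psiLumpShifted {p : ℝ × ℝ} (hp : 0 < p.1 ^ 2 + p.2 ^ 2) :
    psiLump p = (0, 0, -1) + psiLumpShifted p := by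
  simp only [psiLump, psiLumpShifted, radialFactor_eq hp, Prod.mk_add_mk, zero_add, zprof,
    sq_sqrt hp.le, div_mul_eq_mul_div]
  ring_nf

lemma contDiffAt_psiLumpShifted {p : ℝ × ℝ} (hp : 0 < p.1 ^ 2 + p.2 ^ 2) {n : ℕ} :
    ContDiffAt ℝ n psiLumpShifted p := by
  have hq : ContDiffAt ℝ n (fun y : ℝ × ℝ => y.1 ^ 2 + y.2 ^ 2) p := by fun_prop
  have ha := (contDiffAt_radialFactor hp).comp p hq
  have hz : ContDiffAt ℝ n (fun y : ℝ × ℝ => 2 * exp (-1 / 2 * (y.1 ^ 2 + y.2 ^ 2))) p := by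
    fun_prop
  exact (ha.mul contDiffAt_fst).prodMk ((ha.mul contDiffAt_snd).prodMk hz)

lemma iteratedFDeriv_psiLump {p : ℝ × ℝ} (hp : 0 < p.1 ^ 2 + p.2 ^ 2) {i : ℕ}
    (hi : i ≠ 0) :
    iteratedFDeriv ℝ i psiLump p = iteratedFDeriv ℝ i psiLumpShifted p := by
  have hev : psiLump =ᶠ[𝓝 p] fun y => (0, 0, -1) + psiLumpShifted y := by
    have hU : IsOpen {y : ℝ × ℝ | 0 < y.1 ^ 2 + y.2 ^ 2} :=
      isOpen_lt continuous_const (by fun_prop)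
    filter_upwards [hU.mem_nhds hp] with y hy
    exact psiLump_eq_add_psiLumpShifted hy
  rw [(hev.iteratedFDeriv ℝ i).eq_of_nhds, fun_iteratedFDeriv_add_apply contDiffAt_const
    (contDiffAt_psiLumpShifted hp), iteratedFDeriv_const_of_ne hi, Pi.zero_apply, zero_add]

lemma iteratedFDerivLE_sq_add_sq {p : ℝ × ℝ} (hp : 0 < p.1 ^ 2 + p.2 ^ 2) (n : ℕ) :
    IteratedFDerivLE (fun y : ℝ × ℝ => y.1 ^ 2 + y.2 ^ 2) p n
      (2 ^ (n + 1) * (p.1 ^ 2 + p.2 ^ 2)) (√(p.1 ^ 2 + p.2 ^ 2))⁻¹ := by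
  have hR := sqrt_pos.mpr hp
  have hfst := iteratedFDerivLE_fst p hR (abs_le_sqrt (by nlinarith)) n
  have hsnd := iteratedFDerivLE_snd p hR (abs_le_sqrt (by nlinarith)) n
  have h := (hfst.mul contDiffAt_fst contDiffAt_fst hfst).add (by fun_prop) (by fun_prop)
    (hsnd.mul contDiffAt_snd contDiffAt_snd hsnd)
  simp only [← sq] at h
  refine h.mono (le_of_eq ?_) (inv_nonneg.mpr hR.le) le_rfl
  rw [mul_assoc, mul_self_sqrt hp.le, pow_succ]
  ring

lemma IteratedFDerivLE.comp_sq_add_sq {F : Type*} [NormedAddCommGroup F] [NormedSpace ℝ F]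
    {g : ℝ → F} {p : ℝ × ℝ} {C : ℝ}
    (hR : 1 ≤ √(p.1 ^ 2 + p.2 ^ 2)) (hg : ContDiffAt ℝ 2 g (p.1 ^ 2 + p.2 ^ 2))
    (hgC : IteratedFDerivLE g (p.1 ^ 2 + p.2 ^ 2) 2 C 1) :
    IteratedFDerivLE (fun y : ℝ × ℝ => g (y.1 ^ 2 + y.2 ^ 2)) p 2 (2 * C)
      (8 * √(p.1 ^ 2 + p.2 ^ 2)) := by
  have hp : 0 < p.1 ^ 2 + p.2 ^ 2 := sqrt_pos.mp (one_pos.trans_le hR)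
  have hs : 1 ≤ p.1 ^ 2 + p.2 ^ 2 := one_le_sqrt.mp hR
  have h := hgC.comp (f := fun y : ℝ × ℝ => y.1 ^ 2 + y.2 ^ 2) hg (by fun_prop)
    (iteratedFDerivLE_sq_add_sq hp 2) (by norm_num; linarith) (by positivity)
  have hR0 : √(p.1 ^ 2 + p.2 ^ 2) ≠ 0 := (sqrt_pos.mpr hp).ne'
  refine h.mono (by norm_num) (by positivity) (le_of_eq ?_)
  calc (2 : ℝ) ^ (2 + 1) * (p.1 ^ 2 + p.2 ^ 2) * (√(p.1 ^ 2 + p.2 ^ 2))⁻¹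
      = 8 * (√(p.1 ^ 2 + p.2 ^ 2) * √(p.1 ^ 2 + p.2 ^ 2)) * (√(p.1 ^ 2 + p.2 ^ 2))⁻¹ := by
        rw [mul_self_sqrt hp.le]; norm_num
    _ = 8 * √(p.1 ^ 2 + p.2 ^ 2) := by field_simp

lemma iteratedFDerivLE_psiLumpShifted {p : ℝ × ℝ} (hR : 1 ≤ √(p.1 ^ 2 + p.2 ^ 2)) :
    IteratedFDerivLE psiLumpShifted p 2 (2 ^ 17 * exp (-(p.1 ^ 2 + p.2 ^ 2) / 4))
      (8 * √(p.1 ^ 2 + p.2 ^ 2)) := by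
  set s := p.1 ^ 2 + p.2 ^ 2
  set R := √s
  have hR0 : 0 < R := by linarith
  have hs : 1 ≤ s := one_le_sqrt.mp hR
  have hs0 : 0 < s := by linarith
  have hρ : R⁻¹ ≤ 8 * R := by
    rw [inv_le_iff_one_le_mul₀ hR0]; nlinarith
  have haC := (contDiffAt_radialFactor (n := 2) hs0).comp p
    (by fun_prop : ContDiffAt ℝ 2 (fun y : ℝ × ℝ => y.1 ^ 2 + y.2 ^ 2) p)
  have ha := (iteratedFDerivLE_radialFactor hs).comp_sq_add_sq hR (contDiffAt_radialFactor hs0)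
  have hA : 2 ^ 2 * (2 * (2 ^ 14 * exp (-s / 4) / R)) * R = 2 ^ 17 * exp (-s / 4) := by
    field_simp
  have h₁ := (ha.mul haC contDiffAt_fst ((iteratedFDerivLE_fst p hR0
    (abs_le_sqrt (by linarith [sq_nonneg p.2])) 2).mono le_rfl (by positivity) hρ)).mono
    hA.le (by positivity) le_rfl
  have h₂ := (ha.mul haC contDiffAt_snd ((iteratedFDerivLE_snd p hR0
    (abs_le_sqrt (by linarith [sq_nonneg p.1])) 2).mono le_rfl (by positivity) hρ)).mono
    hA.le (by positivity) le_rfl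
  have hexp : IteratedFDerivLE (fun t => 2 * exp (-1 / 2 * t)) s 2
      (2 ^ 2 * ‖(2 : ℝ)‖ * exp (-1 / 2 * s)) 1 :=
    (iteratedFDerivLE_const (2 : ℝ) s 2 zero_le_one).mul contDiffAt_const (by fun_prop)
      (iteratedFDerivLE_exp_const_mul (by norm_num [abs_div]) s 2)
  have h₃ := (hexp.comp_sq_add_sq hR (by fun_prop)).mono (A' := 2 ^ 17 * exp (-s / 4)) (by
      have : exp (-1 / 2 * s) ≤ exp (-s / 4) := exp_le_exp.mpr (by linarith)
      rw [Real.norm_two]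
      nlinarith [exp_pos (-1 / 2 * s)]) (by positivity) le_rfl
  exact h₁.prodMk (haC.mul contDiffAt_fst) ((haC.mul contDiffAt_snd).prodMk (by fun_prop))
    (h₂.prodMk (haC.mul contDiffAt_snd) (by fun_prop) h₃)

/-- Gaussian decay of the first and second derivatives of the hedgehog lump: there are
constants `C, R* > 0` such that for `R = √(X²+Y²) ≥ R*`, the first derivatives are bounded
by `C R e^{-R²/4}` and the second derivatives by `C R² e^{-R²/4}`. -/
theorem stmt12 :
    ∃ C > (0 : ℝ), ∃ Rstar > (0 : ℝ), ∀ p : ℝ × ℝ,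
      Rstar ≤ Real.sqrt (p.1 ^ 2 + p.2 ^ 2) →
      ‖fderiv ℝ psiLump p‖ ≤
          C * Real.sqrt (p.1 ^ 2 + p.2 ^ 2) * Real.exp (-(p.1 ^ 2 + p.2 ^ 2) / 4) ∧
      ‖fderiv ℝ (fderiv ℝ psiLump) p‖ ≤
          C * (p.1 ^ 2 + p.2 ^ 2) * Real.exp (-(p.1 ^ 2 + p.2 ^ 2) / 4) := by
  refine ⟨2 ^ 23, by positivity, 1, one_pos, fun p hR => ?_⟩
  have hp : 0 < p.1 ^ 2 + p.2 ^ 2 := sqrt_pos.mp (one_pos.trans_le hR)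
  have hD := iteratedFDerivLE_psiLumpShifted hR
  constructor
  · rw [← norm_iteratedFDeriv_one, iteratedFDeriv_psiLump hp one_ne_zero]
    have hRe := mul_nonneg (sqrt_nonneg (p.1 ^ 2 + p.2 ^ 2)) (exp_pos (-(p.1 ^ 2 + p.2 ^ 2) / 4)).le
    calc _ ≤ _ := hD 1 (by norm_num)
      _ ≤ _ := by nlinarith
  · rw [← norm_iteratedFDeriv_one, norm_iteratedFDeriv_fderiv,
      iteratedFDeriv_psiLump hp two_ne_zero]
    calc _ ≤ _ := hD 2 le_rfl
      _ = _ := by rw [mul_pow, sq_sqrt hp.le]; ring
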